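/- Fix T > 0, λ > 0, n ≥ 1, m > 0, and nonnegative reals (c_1, ..., c_n) sorted nonincreasingly with Σ_{l=1}^n c_l < m. Suppose there exists k* with 1 ≤ k* ≤ n such that for every l ≤ k*, 2T log(1 + c_l/(m − Σ_{j≤l} c_j)) > λ, and for every l > k*, 2T log(1 + c_l/(m − Σ_{j≤l} c_j)) < λ. Then k* is the unique minimizer over k ∈ {1, ..., n} of IC(k) = 2T log(m − Σ_{l=1}^{k} c_l) + kλ. -/
import Mathlib

open Finset

theorem ic_unique_minimizer (T lam : ℝ) (hT : 0 < T) (hlam : 0 < lam)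
    (n : ℕ) (hn : 1 ≤ n) (m : ℝ) (hm : 0 < m) (c : ℕ → ℝ)
    (hnonneg : ∀ l, 1 ≤ l → l ≤ n → 0 ≤ c l)
    (hmono : ∀ l l', 1 ≤ l → l ≤ l' → l' ≤ n → c l' ≤ c l)
    (hsum : ∑ l ∈ Icc 1 n, c l < m)
    (kstar : ℕ) (hk1 : 1 ≤ kstar) (hkn : kstar ≤ n)
    (hbig : ∀ l, 1 ≤ l → l ≤ kstar →
      lam < 2 * T * Real.log (1 + c l / (m - ∑ j ∈ Icc 1 l, c j)))
    (hsmall : ∀ l, kstar < l → l ≤ n →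
      2 * T * Real.log (1 + c l / (m - ∑ j ∈ Icc 1 l, c j)) < lam) :
    ∀ k, 1 ≤ k → k ≤ n → k ≠ kstar →
      2 * T * Real.log (m - ∑ l ∈ Icc 1 kstar, c l) + (kstar : ℝ) * lam
        < 2 * T * Real.log (m - ∑ l ∈ Icc 1 k, c l) + (k : ℝ) * lam := by
  intro k hk1' hkn' hkne
  have Spos : ∀ j, j ≤ n → 0 < m - ∑ l ∈ Icc 1 j, c l := by
    intro j hj
    have hsub : ∑ l ∈ Icc 1 j, c l ≤ ∑ l ∈ Icc 1 n, c l := by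
      apply Finset.sum_le_sum_of_subset_of_nonneg
      · exact Finset.Icc_subset_Icc_right hj
      · intro i hi _
        exact hnonneg i (mem_Icc.mp hi).1 (mem_Icc.mp hi).2
    linarith
  set f : ℕ → ℝ := fun j => 2 * T * Real.log (m - ∑ l ∈ Icc 1 j, c l) + j * lam
    with hf
  clear_value f
  have key : ∀ j, j + 1 ≤ n →
      f (j+1) - f j
        = lam - 2 * T * Real.log (1 + c (j+1) / (m - ∑ l ∈ Icc 1 (j+1), c l)) := by
    intro j hj
    have hSj1 := Spos (j+1) hj
    have hSj : m - ∑ l ∈ Icc 1 j, c l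
        = (m - ∑ l ∈ Icc 1 (j+1), c l) + c (j+1) := by
      rw [Finset.sum_Icc_succ_top (by omega : 1 ≤ j + 1)]
      ring
    have hc : 0 ≤ c (j+1) := hnonneg (j+1) (by omega) hj
    have h1 : (0:ℝ) < 1 + c (j+1) / (m - ∑ l ∈ Icc 1 (j+1), c l) := by positivity
    have hmul : m - ∑ l ∈ Icc 1 j, c l
        = (m - ∑ l ∈ Icc 1 (j+1), c l)
          * (1 + c (j+1) / (m - ∑ l ∈ Icc 1 (j+1), c l)) := by
      field_simp
      linarith [hSj]
    have hlog : Real.log (m - ∑ l ∈ Icc 1 j, c l)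
        = Real.log (m - ∑ l ∈ Icc 1 (j+1), c l)
          + Real.log (1 + c (j+1) / (m - ∑ l ∈ Icc 1 (j+1), c l)) := by
      rw [hmul, Real.log_mul (ne_of_gt hSj1) (ne_of_gt h1)]
    simp only [hf]
    push_cast
    rw [hlog]; ring
  have stepDec : ∀ j, j + 1 ≤ kstar → f (j+1) < f j := by
    intro j hj
    have hb := hbig (j+1) (by omega) hj
    have hk := key j (by omega)
    have hb' : lam < 2 * T * Real.log (1 + c (j+1) / (m - ∑ l ∈ Icc 1 (j+1), c l)) := hb
    linarith
  have stepInc : ∀ j, kstar ≤ j → j + 1 ≤ n → f j < f (j+1) := by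
    intro j hj hj'
    have hb := hsmall (j+1) (by omega) hj'
    have hk := key j hj'
    have hb' : 2 * T * Real.log (1 + c (j+1) / (m - ∑ l ∈ Icc 1 (j+1), c l)) < lam := hb
    linarith
  have chain1 : ∀ d j, j + (d+1) ≤ kstar → f (j + (d+1)) < f j := by
    intro d
    induction d with
    | zero => intro j hj; exact stepDec j hj
    | succ d ih =>
      intro j hj
      have h1 : f ((j+1) + (d+1)) < f (j+1) := ih (j+1) (by omega)
      have h2 : f (j+1) < f j := stepDec j (by omega)
      have : j + (d+1+1) = (j+1) + (d+1) := by omega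
      rw [this]
      linarith
  have chain2 : ∀ d, kstar + (d+1) ≤ n → f kstar < f (kstar + (d+1)) := by
    intro d
    induction d with
    | zero => intro h; exact stepInc kstar le_rfl h
    | succ d ih =>
      intro h
      have h1 : f kstar < f (kstar + (d+1)) := ih (by omega)
      have h2 : f (kstar + (d+1)) < f (kstar + (d+1) + 1) :=
        stepInc (kstar + (d+1)) (by omega) (by omega)
      have : kstar + (d+1+1) = kstar + (d+1) + 1 := by omega
      rw [this]
      linarith
  have main : f kstar < f k := by
    rcases lt_or_gt_of_ne hkne with h | h
    · have := chain1 (kstar - k - 1) k (by omega)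
      have hkk : k + (kstar - k - 1 + 1) = kstar := by omega
      rwa [hkk] at this
    · have := chain2 (k - kstar - 1) (by omega)
      have hkk : kstar + (k - kstar - 1 + 1) = k := by omega
      rwa [hkk] at this
  simpa only [hf] using main
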